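/- arXiv:2605.23757 — 7 statements merged into one kernel-verified Lean document; each statement's English description precedes it below -/
import Mathlib

section
/- Let m ≥ 1 be an integer, θ ≥ 1 a real number, p ∈ (0,1), and let y_1, …, y_m be positive real numbers with Σ_{i=1}^m y_i = 1. If u_1, …, u_m ∈ (0,1] satisfy u_i ≥ p^{y_i^{1/θ}} for every i, then exp(−(Σ_{i=1}^m (−ln u_i)^θ)^{1/θ}) ≥ p; moreover, equality exp(−(Σ_{i=1}^m (−ln u_i)^θ)^{1/θ}) = p holds when u_i = p^{y_i^{1/θ}} for all i. -/
/-!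
Put `L = -log p ≥ 0`. The hypothesis `p ^ (y i ^ (1/θ)) ≤ u i` says `-log u i ≤ L * y i ^ (1/θ)`,
so `(-log u i) ^ θ ≤ L ^ θ * y i`; summing over `i` with `∑ y i = 1` gives `∑ (-log u i) ^ θ ≤ L ^ θ`,
hence the `θ`-th root is at most `L` and the copula is at least `exp (-L) = p`.
All inequalities are equalities when `u i = p ^ (y i ^ (1/θ))`.
-/

open Finset Real

section RpowSum

variable {ι : Type*} {s : Finset ι} {a w : ι → ℝ} {L θ : ℝ}

lemma mul_rpow_one_div_rpow {x : ℝ} (hL : 0 ≤ L) (hx : 0 ≤ x) (hθ : θ ≠ 0) :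
    (L * x ^ (1 / θ)) ^ θ = L ^ θ * x := by
  rw [mul_rpow hL (rpow_nonneg hx _), one_div, rpow_inv_rpow hx hθ]

lemma sum_rpow_rpow_one_div_le (hθ : 0 < θ) (hL : 0 ≤ L) (ha : ∀ i ∈ s, 0 ≤ a i)
    (hw : ∀ i ∈ s, 0 ≤ w i) (hw1 : ∑ i ∈ s, w i = 1)
    (hle : ∀ i ∈ s, a i ≤ L * w i ^ (1 / θ)) :
    (∑ i ∈ s, a i ^ θ) ^ (1 / θ) ≤ L := by
  have hsum : ∑ i ∈ s, a i ^ θ ≤ L ^ θ :=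
    calc ∑ i ∈ s, a i ^ θ ≤ ∑ i ∈ s, L ^ θ * w i := sum_le_sum fun i hi =>
          (rpow_le_rpow (ha i hi) (hle i hi) hθ.le).trans_eq
            (mul_rpow_one_div_rpow hL (hw i hi) hθ.ne')
      _ = L ^ θ := by rw [← mul_sum, hw1, mul_one]
  calc (∑ i ∈ s, a i ^ θ) ^ (1 / θ) ≤ (L ^ θ) ^ (1 / θ) :=
        rpow_le_rpow (sum_nonneg fun i hi => rpow_nonneg (ha i hi) _) hsum (by positivity)
    _ = L := by rw [one_div, rpow_rpow_inv hL hθ.ne']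

lemma sum_mul_rpow_one_div_rpow_rpow_one_div (hθ : θ ≠ 0) (hL : 0 ≤ L)
    (hw : ∀ i ∈ s, 0 ≤ w i) (hw1 : ∑ i ∈ s, w i = 1) :
    (∑ i ∈ s, (L * w i ^ (1 / θ)) ^ θ) ^ (1 / θ) = L := by
  rw [sum_congr rfl fun i hi => mul_rpow_one_div_rpow hL (hw i hi) hθ, ← mul_sum, hw1, mul_one,
    one_div, rpow_rpow_inv hL hθ]

end RpowSum

section GumbelHougaard

variable {ι : Type*} [Fintype ι] {θ p : ℝ} {y u : ι → ℝ}

noncomputable def gumbelHougaardCopula (θ : ℝ) (u : ι → ℝ) : ℝ :=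
  exp (-(∑ i, (-log (u i)) ^ θ) ^ (1 / θ))

lemma neg_log_rpow (hp : 0 < p) (x : ℝ) : -log (p ^ x) = -log p * x := by
  rw [log_rpow hp]; ring

lemma le_gumbelHougaardCopula (hθ : 0 < θ) (hp0 : 0 < p) (hp1 : p ≤ 1) (hy : ∀ i, 0 ≤ y i)
    (hsum : ∑ i, y i = 1) (hu : ∀ i, u i ≤ 1) (hge : ∀ i, p ^ (y i ^ (1 / θ)) ≤ u i) :
    p ≤ gumbelHougaardCopula θ u := by
  have hu0 (i : ι) : 0 < u i := (rpow_pos_of_pos hp0 _).trans_le (hge i)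
  have hlog_nonneg (i : ι) : 0 ≤ -log (u i) := neg_nonneg.2 (log_nonpos (hu0 i).le (hu i))
  have hlog_le (i : ι) : -log (u i) ≤ -log p * y i ^ (1 / θ) := by
    rw [← neg_log_rpow hp0]
    exact neg_le_neg (log_le_log (rpow_pos_of_pos hp0 _) (hge i))
  have hroot := sum_rpow_rpow_one_div_le hθ (neg_nonneg.2 (log_nonpos hp0.le hp1))
    (fun i _ => hlog_nonneg i) (fun i _ => hy i) hsum (fun i _ => hlog_le i)
  calc p = exp (-(-log p)) := by rw [neg_neg, exp_log hp0]
    _ ≤ gumbelHougaardCopula θ u := exp_le_exp.2 (neg_le_neg hroot)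

lemma gumbelHougaardCopula_rpow (hθ : θ ≠ 0) (hp0 : 0 < p) (hp1 : p ≤ 1) (hy : ∀ i, 0 ≤ y i)
    (hsum : ∑ i, y i = 1) :
    gumbelHougaardCopula θ (fun i => p ^ (y i ^ (1 / θ))) = p := by
  simp only [gumbelHougaardCopula, neg_log_rpow hp0]
  rw [sum_mul_rpow_one_div_rpow_rpow_one_div hθ (neg_nonneg.2 (log_nonpos hp0.le hp1))
    (fun i _ => hy i) hsum, neg_neg, exp_log hp0]

end GumbelHougaard

theorem stmt_0_general (m : ℕ) (θ p : ℝ) (hθ : 1 ≤ θ)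
    (hp : p ∈ Set.Ioo (0:ℝ) 1) (y u : Fin m → ℝ)
    (hy : ∀ i, 0 < y i) (hsum : ∑ i, y i = 1)
    (hu : ∀ i, u i ∈ Set.Ioc (0:ℝ) 1)
    (hge : ∀ i, p ^ (y i ^ (1/θ)) ≤ u i) :
    p ≤ Real.exp (-(∑ i, (-Real.log (u i)) ^ θ) ^ (1/θ)) ∧
      ((∀ i, u i = p ^ (y i ^ (1/θ))) →
        Real.exp (-(∑ i, (-Real.log (u i)) ^ θ) ^ (1/θ)) = p) := by
  have hθ0 : 0 < θ := one_pos.trans_le hθ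
  have hy0 (i : Fin m) : 0 ≤ y i := (hy i).le
  refine ⟨le_gumbelHougaardCopula hθ0 hp.1 hp.2.le hy0 hsum (fun i => (hu i).2) hge, fun heq => ?_⟩
  obtain rfl : u = fun i => p ^ (y i ^ (1 / θ)) := funext heq
  exact gumbelHougaardCopula_rpow hθ0.ne' hp.1 hp.2.le hy0 hsum

/-- Gumbel–Hougaard copula computation: if each `u i` is at least `p ^ (y i ^ (1/θ))`
with positive weights `y` summing to one, then the copula value is at least `p`,
with equality when `u i = p ^ (y i ^ (1/θ))` for all `i`. -/
theorem stmt_0 (m : ℕ) (hm : 1 ≤ m) (θ p : ℝ) (hθ : 1 ≤ θ)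
    (hp : p ∈ Set.Ioo (0:ℝ) 1) (y u : Fin m → ℝ)
    (hy : ∀ i, 0 < y i) (hsum : ∑ i, y i = 1)
    (hu : ∀ i, u i ∈ Set.Ioc (0:ℝ) 1)
    (hge : ∀ i, p ^ (y i ^ (1/θ)) ≤ u i) :
    p ≤ Real.exp (-(∑ i, (-Real.log (u i)) ^ θ) ^ (1/θ)) ∧
      ((∀ i, u i = p ^ (y i ^ (1/θ))) →
        Real.exp (-(∑ i, (-Real.log (u i)) ^ θ) ^ (1/θ)) = p) :=
  stmt_0_general m θ p hθ hp y u hy hsum hu hge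
end

section
/- Let p ∈ (0,1), μ ∈ ℝ, and σ > 0. Then the following are equivalent: (i) every probability measure ν on ℝ with mean ∫x dν(x) = μ and variance ∫(x−μ)² dν(x) = σ² satisfies ν((−∞, 0]) ≥ p; (ii) √(p/(1−p)) · σ + μ ≤ 0. -/
open MeasureTheory ProbabilityTheory

/-!
Sufficiency is Cantelli's inequality `P(X - m ≥ t) ≤ σ² / (σ² + t²)`, which follows from Markov's
inequality for `(X - m + u)²` with the optimal shift `u = σ² / t`: for `t = -m` it bounds
`P(X > 0)` by `σ² / (σ² + m²)`, and `√(p / (1 - p)) σ ≤ -m` says exactly that this is at most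
`1 - p`. Necessity: Cantelli's bound is attained by a two-point law with mass `σ² / (σ² + t²)` at
`m + t`. If `√(p / (1 - p)) σ + m > 0`, any `t` with `max 0 (-m) < t < √(p / (1 - p)) σ` puts that
atom in `(0, ∞)` with mass larger than `1 - p`.
-/

section Cantelli

variable {Ω : Type*} [MeasurableSpace Ω] {μ : Measure Ω} [IsProbabilityMeasure μ] {X : Ω → ℝ}

lemma integral_add_const_sq (hX : MemLp X 2 μ) (c : ℝ) :
    ∫ ω, (X ω + c) ^ 2 ∂μ = Var[X; μ] + (μ[X] + c) ^ 2 := by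
  have hmean : μ[fun ω ↦ X ω + c] = μ[X] + c := by
    rw [integral_add (hX.integrable one_le_two) (integrable_const c)]
    simp
  have hXc : MemLp (fun ω ↦ X ω + c) 2 μ := hX.add (memLp_const c)
  rw [← variance_add_const hX.aestronglyMeasurable c, variance_eq_sub hXc, hmean]
  simp

/-- **Cantelli's inequality**, the one-sided Chebyshev inequality. -/
theorem measureReal_ge_le_variance_div_variance_add_sq (hX : MemLp X 2 μ) {t : ℝ} (ht : 0 < t) :
    μ.real {ω | t ≤ X ω - μ[X]} ≤ Var[X; μ] / (Var[X; μ] + t ^ 2) := by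
  set V := Var[X; μ]
  have hV : 0 ≤ V := variance_nonneg X μ
  -- the shift minimizing the Markov bound `(V + u²) / (t + u)²`
  set u := V / t
  have htu : 0 < t + u := by positivity
  have hsub : {ω | t ≤ X ω - μ[X]} ⊆ {ω | (t + u) ^ 2 ≤ (X ω + (u - μ[X])) ^ 2} := by
    intro ω hω
    exact pow_le_pow_left₀ htu.le (by linarith [hω.out]) 2
  have hmarkov := mul_meas_ge_le_integral_of_nonneg
    (.of_forall fun ω ↦ sq_nonneg (X ω + (u - μ[X]))) (hX.add (memLp_const _)).integrable_sq
    ((t + u) ^ 2)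
  rw [integral_add_const_sq hX, add_sub_cancel] at hmarkov
  calc μ.real {ω | t ≤ X ω - μ[X]}
      ≤ μ.real {ω | (t + u) ^ 2 ≤ (X ω + (u - μ[X])) ^ 2} := measureReal_mono hsub
    _ ≤ (V + u ^ 2) / (t + u) ^ 2 := by rw [le_div_iff₀ (by positivity)]; linarith
    _ = V / (V + t ^ 2) := by simp only [u]; field_simp; ring

end Cantelli

lemma sqrt_div_one_sub_mul_le_iff {p σ t : ℝ} (hp : p ∈ Set.Ioo (0 : ℝ) 1) (hσ : 0 < σ)
    (ht : 0 ≤ t) : √(p / (1 - p)) * σ ≤ t ↔ p ≤ t ^ 2 / (t ^ 2 + σ ^ 2) := by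
  have h1p : 0 < 1 - p := sub_pos.2 hp.2
  have hsqrt : √(p / (1 - p)) * σ = √(p / (1 - p) * σ ^ 2) := by
    rw [Real.sqrt_mul (div_pos hp.1 h1p).le, Real.sqrt_sq hσ.le]
  rw [hsqrt, Real.sqrt_le_left ht,
    le_div_iff₀ (by positivity), div_mul_eq_mul_div, div_le_iff₀ h1p]
  constructor <;> intro h <;> linarith

section TwoPoint

variable {α : Type*} [MeasurableSpace α] {q : ℝ} {a b : α}

noncomputable def twoPoint (q : ℝ) (a b : α) : Measure α :=
  ENNReal.ofReal q • Measure.dirac a + ENNReal.ofReal (1 - q) • Measure.dirac b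

lemma isProbabilityMeasure_twoPoint (hq0 : 0 ≤ q) (hq1 : q ≤ 1) :
    IsProbabilityMeasure (twoPoint q a b) := by
  constructor
  simp only [twoPoint, Measure.add_apply, Measure.smul_apply, smul_eq_mul, measure_univ, mul_one]
  rw [← ENNReal.ofReal_add hq0 (sub_nonneg.2 hq1), add_sub_cancel, ENNReal.ofReal_one]

variable [MeasurableSingletonClass α] {E : Type*} [NormedAddCommGroup E]

lemma integrable_twoPoint (f : α → E) : Integrable f (twoPoint q a b) :=
  ((integrable_dirac enorm_lt_top).smul_measure ENNReal.ofReal_ne_top).add_measure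
    ((integrable_dirac enorm_lt_top).smul_measure ENNReal.ofReal_ne_top)

lemma integral_twoPoint [NormedSpace ℝ E] [CompleteSpace E] (hq0 : 0 ≤ q) (hq1 : q ≤ 1)
    (f : α → E) :
    ∫ x, f x ∂(twoPoint q a b) = q • f a + (1 - q) • f b := by
  rw [twoPoint, integral_add_measure
    ((integrable_dirac enorm_lt_top).smul_measure ENNReal.ofReal_ne_top)
    ((integrable_dirac enorm_lt_top).smul_measure ENNReal.ofReal_ne_top),
    integral_smul_measure, integral_smul_measure, integral_dirac, integral_dirac,
    ENNReal.toReal_ofReal hq0, ENNReal.toReal_ofReal (sub_nonneg.2 hq1)]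

lemma twoPoint_real_le_of_notMem (hq0 : 0 ≤ q) {s : Set α} (hb : b ∉ s) :
    (twoPoint q a b).real s ≤ q := by
  have hle : twoPoint q a b s ≤ ENNReal.ofReal q := by
    simp only [twoPoint, Measure.add_apply, Measure.smul_apply, Measure.dirac_apply,
      Set.indicator_of_notMem hb, smul_eq_mul, mul_zero, add_zero]
    exact mul_le_of_le_one_right' (Set.indicator_le_self s 1 a)
  exact ENNReal.toReal_le_of_le_ofReal hq0 hle

end TwoPoint

lemma exists_mean_variance_measureReal_Iio_le (m σ : ℝ) {t : ℝ} (ht : 0 < t) :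
    ∃ ν : Measure ℝ, IsProbabilityMeasure ν ∧ MemLp id 2 ν ∧ ∫ x, x ∂ν = m ∧
      ∫ x, (x - m) ^ 2 ∂ν = σ ^ 2 ∧ ν.real (Set.Iio (m + t)) ≤ t ^ 2 / (t ^ 2 + σ ^ 2) := by
  set q := t ^ 2 / (t ^ 2 + σ ^ 2)
  have hq0 : 0 ≤ q := by positivity
  have hq1 : q ≤ 1 := div_le_one_of_le₀ (by nlinarith) (by positivity)
  refine ⟨twoPoint q (m - σ ^ 2 / t) (m + t), isProbabilityMeasure_twoPoint hq0 hq1,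
    (memLp_two_iff_integrable_sq aestronglyMeasurable_id).2 (integrable_twoPoint _), ?_, ?_,
    twoPoint_real_le_of_notMem hq0 (lt_irrefl (m + t))⟩
  all_goals
    rw [integral_twoPoint hq0 hq1]
    simp only [q, smul_eq_mul]
    field_simp
    ring

lemma sq_div_sq_add_sq_le_measureReal_Iic_zero {ν : Measure ℝ} [IsProbabilityMeasure ν]
    (hν : MemLp id 2 ν) {m σ : ℝ} (hmean : ∫ x, x ∂ν = m) (hvar : ∫ x, (x - m) ^ 2 ∂ν = σ ^ 2)
    (hm : m < 0) : m ^ 2 / (m ^ 2 + σ ^ 2) ≤ ν.real (Set.Iic 0) := by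
  have hVar : Var[id; ν] = σ ^ 2 := by
    rw [variance_eq_integral aemeasurable_id]
    simpa [hmean] using hvar
  have hCantelli := measureReal_ge_le_variance_div_variance_add_sq hν (neg_pos.2 hm)
  simp only [id, hmean, hVar, neg_sq, add_comm (σ ^ 2)] at hCantelli
  have hIoi : ν.real (Set.Ioi 0) ≤ σ ^ 2 / (m ^ 2 + σ ^ 2) :=
    (measureReal_mono fun x (hx : 0 < x) ↦ show -m ≤ x - m by linarith).trans hCantelli
  have hpos : 0 < m ^ 2 + σ ^ 2 := by nlinarith
  have hcompl : σ ^ 2 / (m ^ 2 + σ ^ 2) = 1 - m ^ 2 / (m ^ 2 + σ ^ 2) := by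
    field_simp
    ring
  rw [← Set.compl_Ioi, measureReal_compl measurableSet_Ioi, probReal_univ]
  linarith

/-- One-sided Chebyshev (Marshall–Olkin) equivalence: every distribution on ℝ with
mean `m` and variance `σ²` puts mass at least `p` on `(−∞,0]` iff
`√(p/(1−p))·σ + m ≤ 0`. -/
theorem stmt_6 (p m σ : ℝ) (hp : p ∈ Set.Ioo (0:ℝ) 1) (hσ : 0 < σ) :
    (∀ ν : Measure ℝ, IsProbabilityMeasure ν → MemLp id 2 ν →
      (∫ x, x ∂ν) = m → (∫ x, (x - m) ^ 2 ∂ν) = σ ^ 2 →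
      p ≤ (ν (Set.Iic 0)).toReal)
    ↔ Real.sqrt (p / (1 - p)) * σ + m ≤ 0 := by
  have hs : 0 < √(p / (1 - p)) * σ :=
    mul_pos (Real.sqrt_pos.2 (div_pos hp.1 (sub_pos.2 hp.2))) hσ
  constructor
  · intro H
    by_contra! hlt
    obtain ⟨t, hmt, hts⟩ :=
      exists_between (max_lt hs (by linarith) : max 0 (-m) < √(p / (1 - p)) * σ)
    obtain ⟨ht, hmt⟩ := max_lt_iff.1 hmt
    obtain ⟨ν, hν, hν2, hmean, hvar, hIio⟩ := exists_mean_variance_measureReal_Iio_le m σ ht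
    have hIic : ν.real (Set.Iic 0) ≤ ν.real (Set.Iio (m + t)) :=
      measureReal_mono (Set.Iic_subset_Iio.2 (by linarith))
    exact (sqrt_div_one_sub_mul_le_iff hp hσ ht.le).not.1 hts.not_ge
      ((H ν hν hν2 hmean hvar).trans (hIic.trans hIio))
  · intro h ν hν hν2 hmean hvar
    have hm : m < 0 := by linarith
    have hp' := (sqrt_div_one_sub_mul_le_iff hp hσ (neg_nonneg.2 hm.le)).1 (by linarith)
    rw [neg_sq] at hp'
    exact hp'.trans (sq_div_sq_add_sq_le_measureReal_Iic_zero hν2 hmean hvar hm)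
end

section
/- Let p ∈ (0,1), let μ_d ∈ ℂ^m, let Γ_d ∈ ℂ^{m×m} be Hermitian and J_d ∈ ℂ^{m×m} be symmetric, and suppose there exists at least one random vector in ℂ^m with mean μ_d, covariance matrix Γ_d, and pseudo-covariance matrix J_d. Fix z̃ ∈ ℂ^m and set μ_φ = Re(Σ_j μ_{d,j} z̃_j) and σ_φ² = (1/2)(Σ_{j,k} z̃_j · conj(z̃_k) · (Γ_d)_{jk} + Re(Σ_{j,k} z̃_j z̃_k (J_d)_{jk})), and assume σ_φ > 0. Then the following are equivalent: (i) every random vector d in ℂ^m (on any probability space) with mean μ_d, covariance Γ_d, and pseudo-covariance J_d satisfies P[Re(Σ_j d_j z̃_j) ≤ 0] ≥ p; (ii) √(p/(1−p)) · σ_φ + μ_φ ≤ 0. -/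
/-!
Write `φ = Re ∑ j, (d j - μd j) * z j`; it has mean `0` and variance `σ_φ²` for every admissible
`d`, and `Re ∑ j, d j * z j = μ_φ + φ`. Sufficiency is then Cantelli's one-sided inequality
`P[φ ≥ t] ≤ σ_φ² / (σ_φ² + t²)` at `t = -μ_φ`.

For necessity, take one admissible `d` and split `d - μd = R + c φ` with `c` the `L²`-projection
coefficients, so that `R` is uncorrelated with `φ` and `Re ∑ j, R j * z j = 0`. Replacing `φ` by an
independent centred `X` of variance `σ_φ²` keeps all first and second moments, and turns
`Re ∑ j, d j * z j` into `μ_φ + X`. If `√(p/(1-p)) σ_φ + μ_φ > 0`, a two-point law for `X` makes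
`P[μ_φ + X ≤ 0] < p`.
-/

open MeasureTheory ProbabilityTheory Finset

section L2

variable {Ω : Type*} [MeasurableSpace Ω] {P : Measure Ω}

lemma MeasureTheory.MemLp.integrable_fun_mul {f g : Ω → ℂ} (hf : MemLp f 2 P) (hg : MemLp g 2 P) :
    Integrable (fun ω => f ω * g ω) P :=
  hf.integrable_mul hg

lemma integral_sum_mul_sum {ι : Type*} [Fintype ι] {f g : ι → Ω → ℂ}
    (hf : ∀ j, MemLp (f j) 2 P) (hg : ∀ k, MemLp (g k) 2 P) (a b : ι → ℂ) :
    ∫ ω, (∑ j, f j ω * a j) * (∑ k, g k ω * b k) ∂P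
      = ∑ j, ∑ k, a j * b k * ∫ ω, f j ω * g k ω ∂P := by
  simp_rw [sum_mul_sum]
  rw [integral_finsetSum _ fun j _ => integrable_finsetSum _ fun k _ =>
    (((hf j).integrable_fun_mul (hg k)).mul_const (a j * b k)).congr
      (Filter.Eventually.of_forall fun ω => by ring)]
  refine sum_congr rfl fun j _ => ?_
  rw [integral_finsetSum _ fun k _ =>
    (((hf j).integrable_fun_mul (hg k)).mul_const (a j * b k)).congr
      (Filter.Eventually.of_forall fun ω => by ring)]
  refine sum_congr rfl fun k _ => ?_
  rw [← integral_const_mul]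
  congr 1 with ω
  ring

lemma integral_re_sq {w : Ω → ℂ} (hw : MemLp w 2 P) :
    ∫ ω, (w ω).re ^ 2 ∂P
      = ((∫ ω, w ω * star (w ω) ∂P).re + (∫ ω, w ω * w ω ∂P).re) / 2 := by
  have hww : Integrable (fun ω => w ω * w ω) P := hw.integrable_fun_mul hw
  have hwc : Integrable (fun ω => w ω * star (w ω)) P := hw.integrable_fun_mul hw.star
  have hsq : ∀ ω, (w ω).re ^ 2 = ((w ω * star (w ω)).re + (w ω * w ω).re) / 2 := fun ω => by
    simp only [Complex.mul_re, Complex.star_def, Complex.conj_re, Complex.conj_im]; ring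
  simp_rw [hsq, ← RCLike.re_to_complex]
  rw [integral_div, integral_add hwc.re hww.re, integral_re hwc, integral_re hww]

lemma integral_add_mul_mul_add_mul {f g ξ : Ω → ℂ} (hf : MemLp f 2 P) (hg : MemLp g 2 P)
    (hξ : MemLp ξ 2 P) (hfξ : ∫ ω, f ω * ξ ω ∂P = 0) (hgξ : ∫ ω, g ω * ξ ω ∂P = 0) (a b : ℂ) :
    ∫ ω, (f ω + a * ξ ω) * (g ω + b * ξ ω) ∂P
      = ∫ ω, f ω * g ω ∂P + a * b * ∫ ω, ξ ω * ξ ω ∂P := by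
  have hexp : ∀ ω, (f ω + a * ξ ω) * (g ω + b * ξ ω)
      = f ω * g ω + b * (f ω * ξ ω) + a * (g ω * ξ ω) + a * b * (ξ ω * ξ ω) := fun ω => by ring
  have hfg := hf.integrable_fun_mul hg
  have hfξ' := (hf.integrable_fun_mul hξ).const_mul b
  have hgξ' := (hg.integrable_fun_mul hξ).const_mul a
  have hξξ := (hξ.integrable_fun_mul hξ).const_mul (a * b)
  simp_rw [hexp]
  rw [integral_add ((hfg.fun_add hfξ').fun_add hgξ') hξξ, integral_add (hfg.fun_add hfξ') hgξ',
    integral_add hfg hfξ', integral_const_mul, integral_const_mul, integral_const_mul, hfξ, hgξ]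
  ring

end L2

section Cantelli

variable {Ω : Type*} [MeasurableSpace Ω] {P : Measure Ω} [IsProbabilityMeasure P]

lemma measureReal_ge_le_div_add_sq {X : Ω → ℝ} (hX : MemLp X 2 P) (hX0 : ∫ ω, X ω ∂P = 0)
    {t : ℝ} (ht : 0 < t) :
    P.real {ω | t ≤ X ω} ≤ (∫ ω, X ω ^ 2 ∂P) / (∫ ω, X ω ^ 2 ∂P + t ^ 2) := by
  set v := ∫ ω, X ω ^ 2 ∂P
  have hv : 0 ≤ v := integral_nonneg fun ω => sq_nonneg _
  -- Markov's inequality for `(X + u)²`, with the optimal shift `u = v / t`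
  set u := v / t
  have hu : 0 ≤ u := div_nonneg hv ht.le
  have hXu : ∫ ω, (X ω + u) ^ 2 ∂P = v + u ^ 2 := by
    have hexp : ∀ ω, (X ω + u) ^ 2 = X ω ^ 2 + 2 * u * X ω + u ^ 2 := fun ω => by ring
    simp_rw [hexp]
    rw [integral_add (hX.integrable_sq.fun_add ((hX.integrable one_le_two).const_mul _))
        (integrable_const _),
      integral_add hX.integrable_sq ((hX.integrable one_le_two).const_mul _),
      integral_const_mul, hX0]
    simp [v]
  have hint : Integrable (fun ω => (X ω + u) ^ 2) P := (hX.add (memLp_const u)).integrable_sq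
  have hmarkov := mul_meas_ge_le_integral_of_nonneg
    (Filter.Eventually.of_forall fun ω => sq_nonneg _) hint ((t + u) ^ 2)
  rw [hXu] at hmarkov
  have hsub : P.real {ω | t ≤ X ω} ≤ P.real {ω | (t + u) ^ 2 ≤ (X ω + u) ^ 2} :=
    measureReal_mono fun ω (hω : t ≤ X ω) =>
      pow_le_pow_left₀ (add_nonneg ht.le hu) (show t + u ≤ X ω + u by linarith) 2
  calc P.real {ω | t ≤ X ω} ≤ (v + u ^ 2) / (t + u) ^ 2 := by
        rw [le_div_iff₀ (by positivity)]; nlinarith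
    _ = v / (v + t ^ 2) := by
        simp only [u]
        field_simp
        ring

end Cantelli

lemma div_add_sq_le_one_sub {p v μ : ℝ} (hp : p ∈ Set.Ioo (0:ℝ) 1) (hv : 0 < v)
    (h : Real.sqrt (p / (1 - p)) * Real.sqrt v + μ ≤ 0) :
    v / (v + μ ^ 2) ≤ 1 - p := by
  obtain ⟨hp0, hp1⟩ := hp
  have hsq : (Real.sqrt (p / (1 - p)) * Real.sqrt v) ^ 2 = p / (1 - p) * v := by
    rw [mul_pow, Real.sq_sqrt (div_pos hp0 (by linarith)).le, Real.sq_sqrt hv.le]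
  have hμ : p / (1 - p) * v ≤ μ ^ 2 := by
    rw [← hsq, ← neg_sq μ]
    exact pow_le_pow_left₀ (by positivity) (by linarith) 2
  rw [div_mul_eq_mul_div, div_le_iff₀ (by linarith)] at hμ
  rw [div_le_iff₀ (by positivity)]
  nlinarith

section Moments

variable {Ω ι : Type*} [MeasurableSpace Ω] {P : Measure Ω}

structure HasMoments (P : Measure Ω) (d : Ω → ι → ℂ) (μd : ι → ℂ) (Γ J : Matrix ι ι ℂ) :
    Prop where
  memLp : ∀ j, MemLp (fun ω => d ω j) 2 P
  integral_eq : ∀ j, ∫ ω, d ω j ∂P = μd j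
  covariance_eq : ∀ j k, ∫ ω, (d ω j - μd j) * star (d ω k - μd k) ∂P = Γ j k
  pseudoCovariance_eq : ∀ j k, ∫ ω, (d ω j - μd j) * (d ω k - μd k) ∂P = J j k

/-- The variance `σ_φ²` of `Re ∑ j, d j * z j` when `d` has covariance `Γ` and
pseudo-covariance `J`. -/
noncomputable def reVariance [Fintype ι] (Γ J : Matrix ι ι ℂ) (z : ι → ℂ) : ℝ :=
  (1/2) * ((∑ j, ∑ k, z j * star (z k) * Γ j k).re + (∑ j, ∑ k, z j * z k * J j k).re)

namespace HasMoments

variable {d : Ω → ι → ℂ} {μd : ι → ℂ} {Γ J : Matrix ι ι ℂ} [IsProbabilityMeasure P]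

lemma memLp_sub (hd : HasMoments P d μd Γ J) (j : ι) :
    MemLp (fun ω => d ω j - μd j) 2 P :=
  (hd.memLp j).sub (memLp_const _)

lemma integral_sub_eq_zero (hd : HasMoments P d μd Γ J) (j : ι) :
    ∫ ω, (d ω j - μd j) ∂P = 0 := by
  rw [integral_sub ((hd.memLp j).integrable one_le_two) (integrable_const _), hd.integral_eq j,
    integral_const, probReal_univ, one_smul, sub_self]

variable [Fintype ι]

lemma memLp_sum (hd : HasMoments P d μd Γ J) (z : ι → ℂ) :
    MemLp (fun ω => ∑ j, (d ω j - μd j) * z j) 2 P :=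
  memLp_finsetSum _ fun j _ => (hd.memLp_sub j).mul_const (z j)

lemma memLp_re_sum (hd : HasMoments P d μd Γ J) (z : ι → ℂ) :
    MemLp (fun ω => (∑ j, (d ω j - μd j) * z j).re) 2 P :=
  (hd.memLp_sum z).re

lemma integral_re_sum_eq_zero (hd : HasMoments P d μd Γ J) (z : ι → ℂ) :
    ∫ ω, (∑ j, (d ω j - μd j) * z j).re ∂P = 0 := by
  have hint : ∀ j, Integrable (fun ω => (d ω j - μd j) * z j) P := fun j =>
    ((hd.memLp_sub j).integrable one_le_two).mul_const (z j)
  simp_rw [← RCLike.re_to_complex]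
  rw [integral_re (integrable_finsetSum _ fun j _ => hint j),
    integral_finsetSum _ fun j _ => hint j]
  simp [integral_mul_const, hd.integral_sub_eq_zero]

lemma integral_re_sum_sq (hd : HasMoments P d μd Γ J) (z : ι → ℂ) :
    ∫ ω, (∑ j, (d ω j - μd j) * z j).re ^ 2 ∂P = reVariance Γ J z := by
  have hstar : ∀ ω, star (∑ j, (d ω j - μd j) * z j) = ∑ k, star (d ω k - μd k) * star (z k) :=
    fun ω => by simp [star_sum, mul_comm]
  rw [integral_re_sq (hd.memLp_sum z)]
  simp_rw [hstar]
  rw [integral_sum_mul_sum (g := fun k ω => star (d ω k - μd k)) hd.memLp_sub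
      (fun k => (hd.memLp_sub k).star) z (fun k => star (z k)),
    integral_sum_mul_sum hd.memLp_sub hd.memLp_sub z z, reVariance]
  simp only [hd.covariance_eq, hd.pseudoCovariance_eq]
  ring

lemma re_sum_integral_mul_re_sum (hd : HasMoments P d μd Γ J) (z : ι → ℂ) :
    (∑ j, (∫ ω, (d ω j - μd j) * ((∑ k, (d ω k - μd k) * z k).re : ℂ) ∂P) * z j).re
      = reVariance Γ J z := by
  have hφC : MemLp (fun ω => ((∑ k, (d ω k - μd k) * z k).re : ℂ)) 2 P :=
    (hd.memLp_re_sum z).ofReal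
  have hsum : ∑ j, (∫ ω, (d ω j - μd j) * ((∑ k, (d ω k - μd k) * z k).re : ℂ) ∂P) * z j
      = ∫ ω, (∑ j, (d ω j - μd j) * z j) * ((∑ k, (d ω k - μd k) * z k).re : ℂ) ∂P := by
    simp_rw [sum_mul, ← integral_mul_const]
    rw [integral_finsetSum _ fun j _ => (((hd.memLp_sub j).integrable_fun_mul hφC).mul_const
      (z j)).congr (Filter.Eventually.of_forall fun ω => by ring)]
    exact sum_congr rfl fun j _ => integral_congr_ae (Filter.Eventually.of_forall fun ω => by ring)
  have hre := (integral_re ((hd.memLp_sum z).integrable_fun_mul hφC)).symm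
  simp only [RCLike.re_to_complex, Complex.re_mul_ofReal] at hre
  rw [hsum, hre, ← hd.integral_re_sum_sq z]
  simp only [sq]

lemma le_measureReal_re_sum_nonpos (hd : HasMoments P d μd Γ J) {p : ℝ}
    (hp : p ∈ Set.Ioo (0:ℝ) 1) (z : ι → ℂ)
    (hσ : 0 < reVariance Γ J z)
    (h : Real.sqrt (p / (1 - p)) * Real.sqrt (reVariance Γ J z) + (∑ j, μd j * z j).re ≤ 0) :
    p ≤ P.real {ω | (∑ j, d ω j * z j).re ≤ 0} := by
  set φ : Ω → ℝ := fun ω => (∑ j, (d ω j - μd j) * z j).re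
  set c := -(∑ j, μd j * z j).re
  have hc : 0 < c := by
    have := mul_pos (Real.sqrt_pos.2 (div_pos hp.1 (sub_pos.2 hp.2))) (Real.sqrt_pos.2 hσ)
    linarith
  have hset : {ω | (∑ j, d ω j * z j).re ≤ 0} = {ω | c < φ ω}ᶜ := by
    ext ω
    have : (∑ j, d ω j * z j).re = φ ω - c := by
      simp only [φ, c, ← Complex.add_re, sub_neg_eq_add, ← sum_add_distrib, sub_mul,
        sub_add_cancel]
    simp only [Set.mem_ofPred_eq, Set.mem_compl_iff, not_lt, this, sub_nonpos]
  have hφ : MemLp φ 2 P := hd.memLp_re_sum z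
  have hcantelli := measureReal_ge_le_div_add_sq hφ (hd.integral_re_sum_eq_zero z) hc
  rw [hd.integral_re_sum_sq, neg_sq] at hcantelli
  rw [hset, probReal_compl_eq_one_sub₀ (aestronglyMeasurable_const.nullMeasurableSet_lt
    hφ.aestronglyMeasurable)]
  have hlt : P.real {ω | c < φ ω} ≤ P.real {ω | c ≤ φ ω} :=
    measureReal_mono fun ω (hω : c < φ ω) => hω.le
  linarith [div_add_sq_le_one_sub hp hσ h]

end HasMoments

end Moments

section Decomposition

variable {Ω ι : Type*} [MeasurableSpace Ω] {P : Measure Ω} [IsProbabilityMeasure P]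

lemma hasMoments_add_add_mul {R : Ω → ι → ℂ} {ξ : Ω → ℝ} (μd c : ι → ℂ)
    (hR : ∀ j, MemLp (fun ω => R ω j) 2 P) (hξ : MemLp ξ 2 P)
    (hR0 : ∀ j, ∫ ω, R ω j ∂P = 0) (hξ0 : ∫ ω, ξ ω ∂P = 0)
    (hRξ : ∀ j, ∫ ω, R ω j * ξ ω ∂P = 0) :
    HasMoments P (fun ω j => μd j + R ω j + c j * ξ ω) μd
      (Matrix.of fun j k => ∫ ω, R ω j * star (R ω k) ∂P + c j * star (c k) * ∫ ω, ξ ω ^ 2 ∂P)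
      (Matrix.of fun j k => ∫ ω, R ω j * R ω k ∂P + c j * c k * ∫ ω, ξ ω ^ 2 ∂P) := by
  have hξC : MemLp (fun ω => (ξ ω : ℂ)) 2 P := hξ.ofReal
  have hξξ : ∫ ω, (ξ ω : ℂ) * ξ ω ∂P = ∫ ω, ξ ω ^ 2 ∂P := by
    simp_rw [← sq, ← Complex.ofReal_pow]; exact integral_complex_ofReal
  have hRstar : ∀ k, ∫ ω, star (R ω k) * ξ ω ∂P = 0 := fun k => by
    have h := integral_conj (μ := P) (f := fun ω => R ω k * (ξ ω : ℂ))
    rw [hRξ k, map_zero] at h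
    simpa [Complex.conj_ofReal] using h
  have hsub : ∀ ω j, μd j + R ω j + c j * ξ ω - μd j = R ω j + c j * ξ ω := fun ω j => by ring
  refine ⟨fun j => ?_, fun j => ?_, fun j k => ?_, fun j k => ?_⟩
  · exact ((memLp_const (μd j)).add (hR j)).add (hξC.const_mul (c j))
  · rw [integral_add ((integrable_const _).fun_add ((hR j).integrable one_le_two))
      ((hξC.integrable one_le_two).const_mul _), integral_add (integrable_const _)
      ((hR j).integrable one_le_two), integral_const_mul, integral_complex_ofReal, hξ0, hR0]
    simp
  · have hstar : ∀ ω, star (R ω k + c k * ξ ω) = star (R ω k) + star (c k) * ξ ω := fun ω => by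
      simp [Complex.conj_ofReal]
    simp_rw [hsub, hstar]
    rw [integral_add_mul_mul_add_mul (g := fun ω => star (R ω k)) (hR j) (hR k).star hξC (hRξ j)
      (hRstar k), hξξ, Matrix.of_apply]
  · simp_rw [hsub]
    rw [integral_add_mul_mul_add_mul (hR j) (hR k) hξC (hRξ j) (hRξ k), hξξ, Matrix.of_apply]

end Decomposition

namespace HasMoments

variable {Ω ι : Type*} [MeasurableSpace Ω] {P : Measure Ω} [IsProbabilityMeasure P] [Fintype ι]
  {d : Ω → ι → ℂ} {μd : ι → ℂ} {Γ J : Matrix ι ι ℂ}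

lemma exists_orthogonal_decomposition (hd : HasMoments P d μd Γ J) (z : ι → ℂ)
    (hσ : 0 < reVariance Γ J z) :
    ∃ (c : ι → ℂ) (R : Ω → ι → ℂ), (∀ j, MemLp (fun ω => R ω j) 2 P) ∧
      (∀ j, ∫ ω, R ω j ∂P = 0) ∧
      (∀ j, ∫ ω, R ω j * ((∑ k, (d ω k - μd k) * z k).re : ℂ) ∂P = 0) ∧
      (∀ ω j, d ω j = μd j + R ω j + c j * ((∑ k, (d ω k - μd k) * z k).re : ℂ)) ∧
      (∑ j, c j * z j).re = 1 ∧ ∀ ω, (∑ j, R ω j * z j).re = 0 := by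
  set φ : Ω → ℝ := fun ω => (∑ k, (d ω k - μd k) * z k).re
  set σ2 := reVariance Γ J z
  have hσ2 : (σ2 : ℂ) ≠ 0 := Complex.ofReal_ne_zero.2 hσ.ne'
  have hφC : MemLp (fun ω => (φ ω : ℂ)) 2 P := (hd.memLp_re_sum z).ofReal
  have hφφ : ∫ ω, (φ ω : ℂ) * φ ω ∂P = σ2 := by
    simp_rw [← sq, ← Complex.ofReal_pow]
    rw [integral_complex_ofReal, hd.integral_re_sum_sq]
  have hYφ : ∀ j, Integrable (fun ω => (d ω j - μd j) * φ ω) P := fun j =>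
    (hd.memLp_sub j).integrable_fun_mul hφC
  set c : ι → ℂ := fun j => (∫ ω, (d ω j - μd j) * φ ω ∂P) / σ2
  have hα : (∑ j, c j * z j).re = 1 := by
    simp only [c, div_mul_eq_mul_div, ← sum_div, Complex.div_ofReal_re]
    exact (div_eq_one_iff_eq hσ.ne').2 (hd.re_sum_integral_mul_re_sum z)
  refine ⟨c, fun ω j => d ω j - μd j - c j * φ ω,
    fun j => (hd.memLp_sub j).sub (hφC.const_mul _), fun j => ?_, fun j => ?_,
    fun ω j => by ring, hα, fun ω => ?_⟩
  · rw [integral_sub ((hd.memLp_sub j).integrable one_le_two)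
        ((hφC.integrable one_le_two).const_mul _), integral_const_mul, integral_complex_ofReal,
      hd.integral_sub_eq_zero, hd.integral_re_sum_eq_zero]
    simp
  · have hexp : ∀ ω, (d ω j - μd j - c j * φ ω) * φ ω
        = (d ω j - μd j) * φ ω - c j * ((φ ω : ℂ) * φ ω) := fun ω => by ring
    change ∫ ω, (d ω j - μd j - c j * φ ω) * φ ω ∂P = 0
    simp_rw [hexp]
    rw [integral_sub (hYφ j) ((hφC.integrable_fun_mul hφC).const_mul _), integral_const_mul, hφφ,
      div_mul_cancel₀ _ hσ2, sub_self]
  · have hexp : ∑ j, (d ω j - μd j - c j * φ ω) * z j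
        = ∑ j, (d ω j - μd j) * z j - (∑ j, c j * z j) * φ ω := by
      rw [sum_mul, ← sum_sub_distrib]
      exact sum_congr rfl fun j _ => by ring
    rw [hexp, Complex.sub_re, Complex.re_mul_ofReal, hα, one_mul, sub_self]

lemma exists_prod_re_sum_eq (hd : HasMoments P d μd Γ J) (z : ι → ℂ) (hσ : 0 < reVariance Γ J z)
    {ν : Measure ℝ} [IsProbabilityMeasure ν] (hν : MemLp id 2 ν) (hν0 : ∫ x, x ∂ν = 0)
    (hνvar : ∫ x, x ^ 2 ∂ν = reVariance Γ J z) :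
    ∃ d' : Ω × ℝ → ι → ℂ, HasMoments (P.prod ν) d' μd Γ J ∧
      ∀ x, (∑ j, d' x j * z j).re = (∑ j, μd j * z j).re + x.2 := by
  obtain ⟨c, R, hR, hR0, hRφ, hdR, hα, hRz⟩ := hd.exists_orthogonal_decomposition z hσ
  have hΩ := hasMoments_add_add_mul μd c hR (hd.memLp_re_sum z) hR0
    (hd.integral_re_sum_eq_zero z) hRφ
  rw [show (fun ω j => μd j + R ω j + c j * _) = d from funext₂ fun ω j => (hdR ω j).symm] at hΩ
  have hR0' : ∀ j, ∫ x, R x.1 j ∂P.prod ν = 0 := fun j => by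
    rw [integral_fun_fst (fun ω => R ω j), hR0, smul_zero]
  have hν0' : ∫ x, x.2 ∂P.prod ν = 0 := by
    rw [integral_fun_snd (fun x : ℝ => x), hν0, smul_zero]
  have hRν : ∀ j, ∫ x, R x.1 j * (x.2 : ℂ) ∂P.prod ν = 0 := fun j => by
    rw [integral_prod_mul (f := fun ω => R ω j) (g := fun x : ℝ => (x : ℂ)), hR0, zero_mul]
  have hprod := hasMoments_add_add_mul (R := fun x j => R x.1 j) (ξ := fun x : Ω × ℝ => x.2) μd c
    (fun j => (hR j).comp_fst ν) (hν.comp_snd P) hR0' hν0' hRν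
  refine ⟨fun x j => μd j + R x.1 j + c j * x.2, ?_, fun x => ?_⟩
  · convert hprod using 1 <;> ext j k
    · rw [← hd.covariance_eq, hΩ.covariance_eq, Matrix.of_apply, Matrix.of_apply,
        integral_fun_fst (fun ω => R ω j * star (R ω k)), integral_fun_snd (fun x : ℝ => x ^ 2),
        hνvar, hd.integral_re_sum_sq, probReal_univ, probReal_univ, one_smul, one_smul]
    · rw [← hd.pseudoCovariance_eq, hΩ.pseudoCovariance_eq, Matrix.of_apply, Matrix.of_apply,
        integral_fun_fst (fun ω => R ω j * R ω k), integral_fun_snd (fun x : ℝ => x ^ 2),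
        hνvar, hd.integral_re_sum_sq, probReal_univ, probReal_univ, one_smul, one_smul]
  · have hexp : ∑ j, (μd j + R x.1 j + c j * x.2) * z j
        = ∑ j, μd j * z j + ∑ j, R x.1 j * z j + (∑ j, c j * z j) * x.2 := by
      simp only [add_mul, sum_add_distrib, sum_mul]
      exact congrArg _ (sum_congr rfl fun j _ => by ring)
    rw [hexp, Complex.add_re, Complex.add_re, Complex.re_mul_ofReal, hRz, hα]
    ring

end HasMoments

lemma exists_centered_law_measureReal_lt {p σ μ : ℝ} (hp : p ∈ Set.Ioo (0:ℝ) 1) (hσ : 0 < σ)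
    (h : 0 < Real.sqrt (p / (1 - p)) * σ + μ) :
    ∃ ν : Measure ℝ, IsProbabilityMeasure ν ∧ MemLp id 2 ν ∧ ∫ x, x ∂ν = 0 ∧
      ∫ x, x ^ 2 ∂ν = σ ^ 2 ∧ ν.real {x | μ + x ≤ 0} < p := by
  obtain ⟨hp0, hp1⟩ := hp
  have hpq : 0 < p / (1 - p) := div_pos hp0 (by linarith)
  obtain ⟨s, hs, hsp⟩ := exists_between (max_lt (show -μ / σ < Real.sqrt (p / (1 - p)) by
    rw [div_lt_iff₀ hσ]; linarith) (Real.sqrt_pos.2 hpq))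
  have hs0 : 0 < s := (le_max_right _ _).trans_lt hs
  have hμs : 0 < μ + σ * s := by
    have := (le_max_left _ _).trans_lt hs
    rw [div_lt_iff₀ hσ] at this
    linarith
  have hs2 : s ^ 2 * (1 - p) < p := by
    have := pow_lt_pow_left₀ hsp hs0.le two_ne_zero
    rwa [Real.sq_sqrt hpq.le, lt_div_iff₀ (by linarith)] at this
  -- the two-point law with mass `1 / (1 + s²)` at `σ s` and `s² / (1 + s²)` at `-σ / s`
  let q : unitInterval := ⟨1 / (1 + s ^ 2), by positivity,
    by rw [div_le_one (by positivity)]; nlinarith⟩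
  have hq : (q : ℝ) = 1 / (1 + s ^ 2) := rfl
  refine ⟨bernoulliMeasure (σ * s) (-(σ / s)) q, inferInstance,
    (memLp_two_iff_integrable_sq measurable_id.aestronglyMeasurable).2
      (integrable_bernoulliMeasure _ _ _ _), ?_, ?_, ?_⟩
  · rw [integral_bernoulliMeasure, hq, smul_eq_mul, smul_eq_mul]
    field_simp
    ring
  · rw [integral_bernoulliMeasure, hq, smul_eq_mul, smul_eq_mul]
    field_simp
    ring
  · have hS : MeasurableSet {x : ℝ | μ + x ≤ 0} := measurableSet_le (by fun_prop) measurable_const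
    have hnot : σ * s ∉ {x : ℝ | μ + x ≤ 0} := fun hle => by simp at hle; linarith
    by_cases hy : -(σ / s) ∈ {x : ℝ | μ + x ≤ 0}
    · rw [bernoulliMeasure_real_apply_of_notMem_of_mem q hS hnot hy, hq, sub_lt_comm,
        lt_div_iff₀ (by positivity)]
      nlinarith
    · rw [bernoulliMeasure_real_apply_of_notMem_of_notMem q hS hnot hy]
      exact hp0

theorem stmt_7_general (m : ℕ) (p : ℝ) (hp : p ∈ Set.Ioo (0:ℝ) 1)
    (μd : Fin m → ℂ) (Γ J : Matrix (Fin m) (Fin m) ℂ)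
    (hex : ∃ (Ω : Type) (_ : MeasurableSpace Ω) (P : Measure Ω)
        (_ : IsProbabilityMeasure P) (d : Ω → Fin m → ℂ),
        (∀ j, MemLp (fun ω => d ω j) 2 P) ∧
        (∀ j, (∫ ω, d ω j ∂P) = μd j) ∧
        (∀ j k, (∫ ω, (d ω j - μd j) * star (d ω k - μd k) ∂P) = Γ j k) ∧
        (∀ j k, (∫ ω, (d ω j - μd j) * (d ω k - μd k) ∂P) = J j k))
    (z : Fin m → ℂ)
    (μφ : ℝ) (hμφ : μφ = (∑ j, μd j * z j).re)
    (σφsq : ℝ)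
    (hσφ : σφsq = (1/2) * ((∑ j, ∑ k, z j * star (z k) * Γ j k).re
        + (∑ j, ∑ k, z j * z k * J j k).re))
    (hpos : 0 < σφsq) :
    (∀ (Ω : Type) (_ : MeasurableSpace Ω) (P : Measure Ω), IsProbabilityMeasure P →
      ∀ d : Ω → Fin m → ℂ,
        (∀ j, MemLp (fun ω => d ω j) 2 P) →
        (∀ j, (∫ ω, d ω j ∂P) = μd j) →
        (∀ j k, (∫ ω, (d ω j - μd j) * star (d ω k - μd k) ∂P) = Γ j k) →
        (∀ j k, (∫ ω, (d ω j - μd j) * (d ω k - μd k) ∂P) = J j k) →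
        p ≤ (P {ω | (∑ j, d ω j * z j).re ≤ 0}).toReal)
    ↔ Real.sqrt (p / (1 - p)) * Real.sqrt σφsq + μφ ≤ 0 := by
  obtain rfl : σφsq = reVariance Γ J z := hσφ
  subst hμφ
  constructor
  · intro h
    by_contra! hlt
    obtain ⟨Ω, _, P, _, d, hL2, hmean, hcov, hpcov⟩ := hex
    obtain ⟨ν, _, hν, hν0, hνvar, hνp⟩ :=
      exists_centered_law_measureReal_lt hp (Real.sqrt_pos.2 hpos) hlt
    rw [Real.sq_sqrt hpos.le] at hνvar
    obtain ⟨d', hd', hre⟩ := HasMoments.exists_prod_re_sum_eq ⟨hL2, hmean, hcov, hpcov⟩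
      z hpos hν hν0 hνvar
    have hS : MeasurableSet {x : ℝ | (∑ j, μd j * z j).re + x ≤ 0} :=
      measurableSet_le (by fun_prop) measurable_const
    have hset : {x | (∑ j, d' x j * z j).re ≤ 0}
        = Prod.snd ⁻¹' {x : ℝ | (∑ j, μd j * z j).re + x ≤ 0} := by
      ext x
      simp only [Set.mem_ofPred_eq, Set.mem_preimage, hre]
    have hle := h _ _ _ inferInstance d' hd'.memLp hd'.integral_eq hd'.covariance_eq
      hd'.pseudoCovariance_eq
    rw [hset, measurePreserving_snd.measure_preimage hS.nullMeasurableSet] at hle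
    exact absurd hνp (not_lt.2 hle)
  · intro h Ω _ P _ d hL2 hmean hcov hpcov
    exact HasMoments.le_measureReal_re_sum_nonpos ⟨hL2, hmean, hcov, hpcov⟩ hp z hpos h

/-- Distributionally robust complex chance constraint with known mean, covariance
and pseudo-covariance: the worst case over all complex random vectors with the
prescribed moments satisfies the chance constraint at level `p` iff
`√(p/(1−p))·σ_φ + μ_φ ≤ 0`. -/
theorem stmt_7 (m : ℕ) (p : ℝ) (hp : p ∈ Set.Ioo (0:ℝ) 1)
    (μd : Fin m → ℂ) (Γ J : Matrix (Fin m) (Fin m) ℂ)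
    (hΓ : Γ.IsHermitian) (hJ : J.IsSymm)
    (hex : ∃ (Ω : Type) (_ : MeasurableSpace Ω) (P : Measure Ω)
        (_ : IsProbabilityMeasure P) (d : Ω → Fin m → ℂ),
        (∀ j, MemLp (fun ω => d ω j) 2 P) ∧
        (∀ j, (∫ ω, d ω j ∂P) = μd j) ∧
        (∀ j k, (∫ ω, (d ω j - μd j) * star (d ω k - μd k) ∂P) = Γ j k) ∧
        (∀ j k, (∫ ω, (d ω j - μd j) * (d ω k - μd k) ∂P) = J j k))
    (z : Fin m → ℂ)
    (μφ : ℝ) (hμφ : μφ = (∑ j, μd j * z j).re)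
    (σφsq : ℝ)
    (hσφ : σφsq = (1/2) * ((∑ j, ∑ k, z j * star (z k) * Γ j k).re
        + (∑ j, ∑ k, z j * z k * J j k).re))
    (hpos : 0 < σφsq) :
    (∀ (Ω : Type) (_ : MeasurableSpace Ω) (P : Measure Ω), IsProbabilityMeasure P →
      ∀ d : Ω → Fin m → ℂ,
        (∀ j, MemLp (fun ω => d ω j) 2 P) →
        (∀ j, (∫ ω, d ω j ∂P) = μd j) →
        (∀ j k, (∫ ω, (d ω j - μd j) * star (d ω k - μd k) ∂P) = Γ j k) →
        (∀ j k, (∫ ω, (d ω j - μd j) * (d ω k - μd k) ∂P) = J j k) →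
        p ≤ (P {ω | (∑ j, d ω j * z j).re ≤ 0}).toReal)
    ↔ Real.sqrt (p / (1 - p)) * Real.sqrt σφsq + μφ ≤ 0 :=
  stmt_7_general m p hp μd Γ J hex z μφ hμφ σφsq hσφ hpos
end

section
/- Let ν be a probability measure on ℝ with mean μ, variance σ² with σ > 0, and symmetric about its mean, i.e., the pushforward of ν under the map x ↦ 2μ − x equals ν. Let p ∈ [1/2, 1). If σ/√(2(1−p)) + μ ≤ 0, then ν((−∞, 0]) ≥ p. -/
/-!
By symmetry the two tails `[m + c, ∞)` and `(-∞, m - c]` have equal mass, and together they lie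
in `{c ≤ |x - m|}`, so Chebyshev's inequality bounds each of them by `σ² / (2c²)`. For `c = -m`
the hypothesis says exactly that this bound is at most `1 - p`, and the right tail is
`[0, ∞) ⊇ (0, ∞)`, the complement of `(-∞, 0]`.
-/

open MeasureTheory ProbabilityTheory Set

section SymmetricAboutMean

variable {ν : Measure ℝ} {m : ℝ}

theorem measure_Ici_add_eq_measure_Iic_sub (hsymm : ν.map (fun x => 2 * m - x) = ν) (c : ℝ) :
    ν (Ici (m + c)) = ν (Iic (m - c)) := by
  conv_lhs => rw [← hsymm]
  rw [Measure.map_apply (by fun_prop) measurableSet_Ici]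
  congr 1
  ext x
  simp only [mem_preimage, mem_Ici, mem_Iic]
  constructor <;> intro <;> linarith

theorem measureReal_Ici_add_le_variance_div [IsFiniteMeasure ν] (hmem : MemLp id 2 ν)
    (hmean : ∫ x, x ∂ν = m) (hsymm : ν.map (fun x => 2 * m - x) = ν) {c : ℝ} (hc : 0 < c) :
    ν.real (Ici (m + c)) ≤ variance id ν / (2 * c ^ 2) := by
  have htails : Ici (m + c) ∪ Iic (m - c) ⊆ {x | c ≤ |id x - ∫ x, id x ∂ν|} := by
    rintro x (hx | hx) <;> simp only [mem_Ici, mem_Iic] at hx <;>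
      simp only [mem_ofPred_eq, id_eq, hmean, le_abs] <;> [left; right] <;> linarith
  have hdisj : Disjoint (Ici (m + c)) (Iic (m - c)) := Ici_disjoint_Iic.mpr (by linarith)
  have htwo : 2 * ν (Ici (m + c)) ≤ ENNReal.ofReal (variance id ν / c ^ 2) :=
    calc 2 * ν (Ici (m + c)) = ν (Ici (m + c) ∪ Iic (m - c)) := by
          rw [measure_union hdisj measurableSet_Iic, ← measure_Ici_add_eq_measure_Iic_sub hsymm,
            two_mul]
      _ ≤ _ := (measure_mono htails).trans (meas_ge_le_variance_div_sq hmem hc)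
  have hbound : 0 ≤ variance id ν / c ^ 2 := by have := variance_nonneg id ν; positivity
  have htwo_real := ENNReal.toReal_le_of_le_ofReal hbound htwo
  rw [ENNReal.toReal_mul, ENNReal.toReal_ofNat, ← measureReal_def] at htwo_real
  rw [div_mul_eq_div_div_swap, le_div_iff₀ two_pos]
  linarith

end SymmetricAboutMean

/-- Distributionally robust chance constraint over symmetric distributions with
prescribed mean `m` and variance `σ²`: for `p ∈ [1/2, 1)`, if
`σ/√(2(1−p)) + m ≤ 0` then `ν((−∞,0]) ≥ p`. -/
theorem stmt_8 (ν : Measure ℝ) [IsProbabilityMeasure ν]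
    (m σ : ℝ) (hσ : 0 < σ) (hmem : MemLp id 2 ν)
    (hmean : (∫ x, x ∂ν) = m) (hvar : (∫ x, (x - m) ^ 2 ∂ν) = σ ^ 2)
    (hsymm : ν.map (fun x => 2 * m - x) = ν)
    (p : ℝ) (hp : p ∈ Set.Ico (1/2 : ℝ) 1)
    (h : σ / Real.sqrt (2 * (1 - p)) + m ≤ 0) :
    p ≤ (ν (Set.Iic 0)).toReal := by
  obtain ⟨-, hp1⟩ := hp
  have hvariance : variance id ν = σ ^ 2 := by
    rw [variance_eq_integral measurable_id.aemeasurable]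
    simpa only [id_eq, hmean] using hvar
  have hs : 0 < Real.sqrt (2 * (1 - p)) := Real.sqrt_pos.mpr (by linarith)
  have hm : 0 < -m := by linarith [div_pos hσ hs]
  have hσm : σ ^ 2 / (2 * (-m) ^ 2) ≤ 1 - p := by
    have hσs : σ ≤ -m * Real.sqrt (2 * (1 - p)) := (div_le_iff₀ hs).mp (by linarith)
    have hsq : σ ^ 2 ≤ (-m) ^ 2 * (2 * (1 - p)) := by
      rw [← Real.sq_sqrt (by linarith : (0 : ℝ) ≤ 2 * (1 - p)), ← mul_pow]
      exact pow_le_pow_left₀ hσ.le hσs 2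
    rw [div_le_iff₀ (by positivity)]
    linarith
  have htail : ν.real (Ioi 0) ≤ 1 - p := calc
    ν.real (Ioi 0) ≤ ν.real (Ici (m + -m)) := measureReal_mono (by simp)
    _ ≤ σ ^ 2 / (2 * (-m) ^ 2) :=
      hvariance ▸ measureReal_Ici_add_le_variance_div hmem hmean hsymm hm
    _ ≤ 1 - p := hσm
  rw [← measureReal_def, ← compl_Ioi, probReal_compl_eq_one_sub measurableSet_Ioi]
  linarith
end

section
/- Let d be a random vector taking values in ℂ^m with E‖d‖² < ∞ and mean μ_d, and suppose the covariance matrix Σ ∈ ℝ^{2m×2m} of the stacked real random vector [Re d; Im d] satisfies Σ ⪯ L in the Loewner order for a given symmetric matrix L ∈ ℝ^{2m×2m}. Let p ∈ (0,1), let z̃ ∈ ℂ^m, and set w = [Re z̃; −Im z̃] ∈ ℝ^{2m}. If Re(Σ_j μ_{d,j} z̃_j) + √(p/(1−p)) · √(w^T L w) ≤ 0, then P[Re(Σ_j d_j z̃_j) ≤ 0] ≥ p. -/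
/-!
Write `X = Re(∑ j, d j * z j)`. Since `Re(d z) = Re d Re z - Im d Im z`, `X` is the linear
combination `wᵀ [Re d; Im d]`, so `E X = Re(∑ j, μ_j z_j)` and `Var X = wᵀ Σ w ≤ wᵀ L w`.
Cantelli's inequality `P(X - E X ≥ t) ≤ Var X / (Var X + t²)` at `t = -E X` then bounds
`P(X > 0)` by `1 - p`, because the hypothesis squares to `p · wᵀ L w ≤ (1 - p) t²`.
-/

open MeasureTheory ProbabilityTheory Finset

theorem Matrix.PosSemidef.sum_sum_mul_le_of_sub {n : Type*} [Fintype n]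
    {L S : Matrix n n ℝ} (h : (L - S).PosSemidef) (w : n → ℝ) :
    ∑ a, ∑ b, w a * S a b * w b ≤ ∑ a, ∑ b, w a * L a b * w b := by
  have := h.dotProduct_mulVec_nonneg w
  simp only [star_trivial, dotProduct, Matrix.mulVec, Matrix.sub_apply, sub_mul, sum_sub_distrib,
    mul_sub, mul_sum] at this
  simp only [mul_assoc]
  linarith

namespace ProbabilityTheory

variable {Ω : Type*} {mΩ : MeasurableSpace Ω} {μ : Measure Ω}

theorem variance_fun_sum_mul {ι : Type*} [IsFiniteMeasure μ] [Fintype ι] {R : ι → Ω → ℝ}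
    (hR : ∀ i, MemLp (R i) 2 μ) (w : ι → ℝ) :
    Var[fun ω => ∑ i, w i * R i ω; μ] = ∑ i, ∑ j, w i * cov[R i, R j; μ] * w j := by
  rw [variance_fun_sum (X := fun i ω => w i * R i ω) fun i => (hR i).const_mul (w i)]
  simp only [covariance_const_mul_left, covariance_const_mul_right]
  exact sum_congr rfl fun i _ => sum_congr rfl fun j _ => by ring

variable [IsProbabilityMeasure μ] {X : Ω → ℝ}

theorem measureReal_ge_add_le_variance_div (hX : MemLp X 2 μ) {t : ℝ} (ht : 0 < t) :
    μ.real {ω | μ[X] + t ≤ X ω} ≤ Var[X; μ] / (Var[X; μ] + t ^ 2) := by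
  set V := Var[X; μ]
  have hV : 0 ≤ V := variance_nonneg X μ
  -- Markov's inequality for `(X - E X + u)²`; the shift `u = V / t` optimizes the bound.
  set u := V / t
  have hu : 0 ≤ u := div_nonneg hV ht.le
  have hY : MemLp (fun ω => X ω - μ[X]) 2 μ := hX.sub (memLp_const _)
  have hZ : MemLp (fun ω => X ω - μ[X] + u) 2 μ := hY.add (memLp_const _)
  have hZ_var : Var[fun ω => X ω - μ[X] + u; μ] = V := by
    rw [variance_add_const hY.aestronglyMeasurable, variance_sub_const hX.aestronglyMeasurable]
  have hZ_mean : μ[fun ω => X ω - μ[X] + u] = u := by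
    rw [integral_add (hY.integrable one_le_two) (integrable_const _),
      integral_sub (hX.integrable one_le_two) (integrable_const _)]
    simp
  have hZ_sq : ∫ ω, (X ω - μ[X] + u) ^ 2 ∂μ = V + u ^ 2 := by
    have := variance_eq_sub hZ
    rw [hZ_mean, hZ_var] at this
    simp only [Pi.pow_apply] at this
    linarith
  have hsub : {ω | μ[X] + t ≤ X ω} ⊆ {ω | (t + u) ^ 2 ≤ (X ω - μ[X] + u) ^ 2} := fun ω hω =>
    pow_le_pow_left₀ (add_pos_of_pos_of_nonneg ht hu).le
      (by have : μ[X] + t ≤ X ω := hω; linarith) 2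
  have markov : (t + u) ^ 2 * μ.real {ω | (t + u) ^ 2 ≤ (X ω - μ[X] + u) ^ 2}
      ≤ ∫ ω, (X ω - μ[X] + u) ^ 2 ∂μ :=
    mul_meas_ge_le_integral_of_nonneg (.of_forall fun ω => sq_nonneg _) hZ.integrable_sq _
  calc μ.real {ω | μ[X] + t ≤ X ω}
      ≤ μ.real {ω | (t + u) ^ 2 ≤ (X ω - μ[X] + u) ^ 2} := measureReal_mono hsub
    _ ≤ (V + u ^ 2) / (t + u) ^ 2 := by
      rw [le_div_iff₀ (by positivity), mul_comm, ← hZ_sq]; exact markov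
    _ = V / (V + t ^ 2) := by
      simp only [u]; field_simp; ring

theorem le_measureReal_nonpos_of_integral_add_sqrt_le (hX : MemLp X 2 μ) {p V : ℝ}
    (hp : p ∈ Set.Ioo 0 1) (hV : Var[X; μ] ≤ V)
    (h : μ[X] + √(p / (1 - p)) * √V ≤ 0) :
    p ≤ μ.real {ω | X ω ≤ 0} := by
  obtain ⟨hp0, hp1⟩ := hp
  have hodds : 0 < p / (1 - p) := div_pos hp0 (sub_pos.2 hp1)
  have hμX : μ[X] ≤ 0 := by nlinarith [Real.sqrt_nonneg (p / (1 - p)), Real.sqrt_nonneg V]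
  suffices hpos : μ.real {ω | 0 < X ω} ≤ 1 - p by
    have hcompl : {ω | X ω ≤ 0} = {ω | 0 < X ω}ᶜ := by ext; simp
    rw [hcompl, measureReal_compl₀ (nullMeasurableSet_lt aemeasurable_const hX.aemeasurable),
      probReal_univ]
    linarith
  rcases hμX.lt_or_eq with hneg | hzero
  · set t := -μ[X]
    have ht : 0 < t := neg_pos.2 hneg
    have hsq : p / (1 - p) * V ≤ t ^ 2 := by
      rw [← Real.sqrt_le_sqrt_iff (sq_nonneg t), Real.sqrt_sq ht.le, Real.sqrt_mul hodds.le]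
      linarith
    have hVar : p * Var[X; μ] ≤ (1 - p) * t ^ 2 := calc
      p * Var[X; μ] ≤ p * V := mul_le_mul_of_nonneg_left hV hp0.le
      _ = (1 - p) * (p / (1 - p) * V) := by field_simp
      _ ≤ (1 - p) * t ^ 2 := mul_le_mul_of_nonneg_left hsq (sub_pos.2 hp1).le
    calc μ.real {ω | 0 < X ω} ≤ μ.real {ω | μ[X] + t ≤ X ω} :=
          measureReal_mono fun ω hω => by simp only [t, add_neg_cancel]; exact hω.out.le
      _ ≤ Var[X; μ] / (Var[X; μ] + t ^ 2) := measureReal_ge_add_le_variance_div hX ht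
      _ ≤ 1 - p := by
        rw [div_le_iff₀ (add_pos_of_nonneg_of_pos (variance_nonneg X μ) (pow_pos ht 2))]
        linarith
  · have hV0 : V ≤ 0 := by
      rw [hzero, zero_add] at h
      exact Real.sqrt_eq_zero'.1 <| le_antisymm
        (nonpos_of_mul_nonpos_right h (Real.sqrt_pos.2 hodds)) (Real.sqrt_nonneg V)
    have hX0 : ∀ᵐ ω ∂μ, X ω = 0 := by
      filter_upwards [ae_eq_integral_of_variance_eq_zero hX
        (le_antisymm (hV.trans hV0) (variance_nonneg X μ))] with ω hω
      rw [hω, hzero]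
    have hnull : μ {ω | 0 < X ω} = 0 := by
      simpa using ae_iff.1 (hX0.mono fun ω hω => hω.le.not_gt)
    rw [(measureReal_eq_zero_iff).2 hnull]
    linarith

end ProbabilityTheory

def reImStack {ι : Type*} (v : ι → ℂ) : ι ⊕ ι → ℝ :=
  Sum.elim (fun j => (v j).re) (fun j => (v j).im)

theorem re_sum_mul_eq_sum_mul_reImStack {ι : Type*} [Fintype ι] (v z : ι → ℂ) :
    (∑ j, v j * z j).re
      = ∑ a, Sum.elim (fun j => (z j).re) (fun j => -(z j).im) a * reImStack v a := by
  simp only [Complex.re_sum, Complex.mul_re, Fintype.sum_sum_type, reImStack, Sum.elim_inl,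
    Sum.elim_inr, ← sum_add_distrib]
  exact sum_congr rfl fun j _ => by ring

section

variable {Ω ι : Type*} {mΩ : MeasurableSpace Ω} {μ : Measure Ω} {d : Ω → ι → ℂ}

theorem memLp_reImStack {p : ENNReal} (hd : ∀ j, MemLp (fun ω => d ω j) p μ) :
    ∀ a, MemLp (fun ω => reImStack (d ω) a) p μ
  | .inl j => (hd j).re
  | .inr j => (hd j).im

theorem integral_reImStack (hd : ∀ j, Integrable (fun ω => d ω j) μ) :
    ∀ a, ∫ ω, reImStack (d ω) a ∂μ = reImStack (fun j => ∫ ω, d ω j ∂μ) a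
  | .inl j => integral_re (hd j)
  | .inr j => integral_im (hd j)

end

theorem stmt_10_general {Ω : Type*} [MeasurableSpace Ω] (P : Measure Ω) [IsProbabilityMeasure P]
    (m : ℕ) (d : Ω → Fin m → ℂ) (hd : ∀ j, MemLp (fun ω => d ω j) 2 P)
    (μd : Fin m → ℂ) (hμ : ∀ j, (∫ ω, d ω j ∂P) = μd j)
    (Sg L : Matrix (Fin m ⊕ Fin m) (Fin m ⊕ Fin m) ℝ)
    (hSg : ∀ a b, Sg a b = ∫ ω,
        (Sum.elim (fun j => (d ω j).re - (μd j).re) (fun j => (d ω j).im - (μd j).im) a)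
        * (Sum.elim (fun j => (d ω j).re - (μd j).re) (fun j => (d ω j).im - (μd j).im) b) ∂P)
    (hLoewner : (L - Sg).PosSemidef)
    (p : ℝ) (hp : p ∈ Set.Ioo (0:ℝ) 1) (z : Fin m → ℂ)
    (w : Fin m ⊕ Fin m → ℝ)
    (hw : w = Sum.elim (fun j => (z j).re) (fun j => -(z j).im))
    (h : (∑ j, μd j * z j).re
        + Real.sqrt (p / (1 - p)) * Real.sqrt (∑ a, ∑ b, w a * L a b * w b) ≤ 0) :
    p ≤ (P {ω | (∑ j, d ω j * z j).re ≤ 0}).toReal := by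
  set R : Fin m ⊕ Fin m → Ω → ℝ := fun a ω => reImStack (d ω) a
  have hR : ∀ a, MemLp (R a) 2 P := memLp_reImStack hd
  have hR_mean : ∀ a, P[R a] = reImStack μd a := fun a => by
    rw [integral_reImStack (fun j => (hd j).integrable one_le_two), funext hμ]
  have hcov : ∀ a b, cov[R a, R b; P] = Sg a b := fun a b => by
    rw [covariance, hR_mean, hR_mean, hSg]
    rcases a with a | a <;> rcases b with b | b <;> rfl
  have hX : ∀ ω, (∑ j, d ω j * z j).re = ∑ a, w a * R a ω := fun ω => by
    simp only [re_sum_mul_eq_sum_mul_reImStack, hw, R]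
  have hX_Lp : MemLp (fun ω => ∑ a, w a * R a ω) 2 P :=
    memLp_finsetSum _ fun a _ => (hR a).const_mul (w a)
  have hX_mean : P[fun ω => ∑ a, w a * R a ω] = (∑ j, μd j * z j).re := by
    rw [integral_finsetSum _ fun a _ => ((hR a).integrable one_le_two).const_mul _]
    simp only [integral_const_mul, hR_mean, re_sum_mul_eq_sum_mul_reImStack, hw]
  have hX_var : Var[fun ω => ∑ a, w a * R a ω; P] ≤ ∑ a, ∑ b, w a * L a b * w b := by
    rw [variance_fun_sum_mul hR]
    simpa only [hcov] using hLoewner.sum_sum_mul_le_of_sub w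
  have key := le_measureReal_nonpos_of_integral_add_sqrt_le hX_Lp hp hX_var (hX_mean ▸ h)
  simp only [← hX] at key
  exact key

/-- Distributionally robust chance constraint with known mean and an upper bound
`L` (in the Loewner order) on the covariance of the stacked real representation
`[Re d; Im d]`: if `Re(Σ_j μ_{d,j} z_j) + √(p/(1−p))·√(wᵀ L w) ≤ 0` with
`w = [Re z; −Im z]`, then `P[Re(Σ_j d_j z_j) ≤ 0] ≥ p`. -/
theorem stmt_10 {Ω : Type*} [MeasurableSpace Ω] (P : Measure Ω) [IsProbabilityMeasure P]
    (m : ℕ) (d : Ω → Fin m → ℂ) (hd : ∀ j, MemLp (fun ω => d ω j) 2 P)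
    (μd : Fin m → ℂ) (hμ : ∀ j, (∫ ω, d ω j ∂P) = μd j)
    (Sg L : Matrix (Fin m ⊕ Fin m) (Fin m ⊕ Fin m) ℝ)
    (hSg : ∀ a b, Sg a b = ∫ ω,
        (Sum.elim (fun j => (d ω j).re - (μd j).re) (fun j => (d ω j).im - (μd j).im) a)
        * (Sum.elim (fun j => (d ω j).re - (μd j).re) (fun j => (d ω j).im - (μd j).im) b) ∂P)
    (hL : L.IsSymm) (hLoewner : (L - Sg).PosSemidef)
    (p : ℝ) (hp : p ∈ Set.Ioo (0:ℝ) 1) (z : Fin m → ℂ)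
    (w : Fin m ⊕ Fin m → ℝ)
    (hw : w = Sum.elim (fun j => (z j).re) (fun j => -(z j).im))
    (h : (∑ j, μd j * z j).re
        + Real.sqrt (p / (1 - p)) * Real.sqrt (∑ a, ∑ b, w a * L a b * w b) ≤ 0) :
    p ≤ (P {ω | (∑ j, d ω j * z j).re ≤ 0}).toReal :=
  stmt_10_general P m d hd μd hμ Sg L hSg hLoewner p hp z w hw h
end

section
/- Let w_1, …, w_n be independent complex-valued random variables with E[w_j] = 0 and |w_j| ≤ l_j almost surely, where l_j ≥ 0. Let z ∈ ℂ^n, μ ∈ ℝ with μ ≤ 0, and p ∈ (0,1). If √(2 ln(1/(1−p))) · √(Σ_{j=1}^n l_j² |z_j|²) + μ ≤ 0, then P[μ + Σ_{j=1}^n Re(w_j z_j) ≤ 0] ≥ p. -/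
open MeasureTheory ProbabilityTheory Finset
open scoped NNReal

/-!
Each summand `Re (w_j z_j)` is centred and bounded by `l_j ‖z_j‖`, so by Hoeffding's lemma it is
sub-Gaussian with parameter `l_j² ‖z_j‖²`; by independence the sum is sub-Gaussian with parameter
`σ² = Σ_j l_j² ‖z_j‖²`. The Chernoff bound `exp (-ε² / (2σ²))` at `ε = -μ` is at most `1 - p`
exactly when `√(2 log (1 / (1 - p))) σ ≤ -μ`. When `σ = 0` the sum vanishes almost surely instead.
-/

section

variable {Ω : Type*} [MeasurableSpace Ω] {μ : Measure Ω}

lemma ProbabilityTheory.hasSubgaussianMGF_of_abs_le_of_integral_eq_zero [IsProbabilityMeasure μ]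
    {X : Ω → ℝ} {a : ℝ} (hm : AEMeasurable X μ) (hb : ∀ᵐ ω ∂μ, |X ω| ≤ a) (hc : μ[X] = 0) :
    HasSubgaussianMGF X (‖a‖₊ ^ 2) μ := by
  have h := hasSubgaussianMGF_of_mem_Icc_of_integral_eq_zero hm
    (hb.mono fun ω hω => abs_le.1 hω) hc
  convert h using 2
  rw [sub_neg_eq_add, ← two_mul, nnnorm_mul]
  simp

lemma ProbabilityTheory.HasSubgaussianMGF.measureReal_gt_le [IsFiniteMeasure μ] {X : Ω → ℝ}
    {c : ℝ≥0} (h : HasSubgaussianMGF X c μ) {ε q : ℝ} (hq : 0 < q)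
    (hε : √(2 * Real.log (1 / q)) * √c ≤ ε) :
    μ.real {ω | ε < X ω} ≤ q := by
  have hε0 : 0 ≤ ε := (by positivity : (0 : ℝ) ≤ _).trans hε
  rcases eq_or_ne c 0 with rfl | hc
  · have hnull : μ {ω | ε < X ω} = 0 :=
      measure_mono_null (fun ω hω => hε0.trans_lt hω |>.ne')
        h.ae_eq_zero_of_hasSubgaussianMGF_zero
    simp [measureReal_def, hnull, hq.le]
  · have hsq : 2 * Real.log (1 / q) * c ≤ ε ^ 2 := by
      rw [← Real.sqrt_mul' _ c.coe_nonneg] at hε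
      exact (Real.sqrt_le_iff.1 hε).2
    calc μ.real {ω | ε < X ω} ≤ μ.real {ω | ε ≤ X ω} :=
          measureReal_mono (Set.ofPred_subset_ofPred.2 fun _ => le_of_lt)
      _ ≤ Real.exp (-ε ^ 2 / (2 * c)) := h.measure_ge_le hε0
      _ ≤ Real.exp (Real.log q) := by
          rw [Real.exp_le_exp, div_le_iff₀ (by positivity)]
          rw [one_div, Real.log_inv] at hsq
          linarith
      _ = q := Real.exp_log hq

lemma ProbabilityTheory.hasSubgaussianMGF_re_mul_const [IsProbabilityMeasure μ] {w : Ω → ℂ}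
    {l : ℝ} (hw : AEStronglyMeasurable w μ) (hb : ∀ᵐ ω ∂μ, ‖w ω‖ ≤ l) (hc : μ[w] = 0)
    (z : ℂ) :
    HasSubgaussianMGF (fun ω => (w ω * z).re) (‖l * ‖z‖‖₊ ^ 2) μ := by
  have hint : Integrable w μ := Integrable.of_bound hw l hb
  refine hasSubgaussianMGF_of_abs_le_of_integral_eq_zero
    (Complex.measurable_re.comp_aemeasurable (hw.aemeasurable.mul_const z)) ?_ ?_
  · filter_upwards [hb] with ω hω
    calc |(w ω * z).re| ≤ ‖w ω * z‖ := Complex.abs_re_le_norm _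
      _ = ‖w ω‖ * ‖z‖ := norm_mul _ _
      _ ≤ l * ‖z‖ := by gcongr
  · change ∫ ω, RCLike.re (w ω * z) ∂μ = 0
    rw [integral_re (hint.mul_const z), integral_mul_const, hc, zero_mul, map_zero]

end

theorem stmt_13_general {Ω : Type*} [MeasurableSpace Ω] (P : Measure Ω) [IsProbabilityMeasure P]
    (n : ℕ) (w : Fin n → Ω → ℂ) (hmeas : ∀ j, Measurable (w j))
    (hindep : iIndepFun w P)
    (l : Fin n → ℝ)
    (hbound : ∀ j, ∀ᵐ ω ∂P, ‖w j ω‖ ≤ l j)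
    (hmean : ∀ j, (∫ ω, w j ω ∂P) = 0)
    (z : Fin n → ℂ) (μ : ℝ) (p : ℝ) (hp : p ∈ Set.Ioo (0:ℝ) 1)
    (h : Real.sqrt (2 * Real.log (1 / (1 - p)))
          * Real.sqrt (∑ j, (l j) ^ 2 * ‖z j‖ ^ 2) + μ ≤ 0) :
    p ≤ (P {ω | μ + ∑ j, (w j ω * z j).re ≤ 0}).toReal := by
  have hsum := HasSubgaussianMGF.sum_of_iIndepFun (s := univ)
    (hindep.comp (fun j x => (x * z j).re) fun j => by fun_prop)
    fun j _ => hasSubgaussianMGF_re_mul_const (hmeas j).aestronglyMeasurable (hbound j)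
      (hmean j) (z j)
  have hvar : ((∑ j, ‖l j * ‖z j‖‖₊ ^ 2 : ℝ≥0) : ℝ) = ∑ j, l j ^ 2 * ‖z j‖ ^ 2 := by
    push_cast
    simp [mul_pow]
  set A := {ω | μ + ∑ j, (w j ω * z j).re ≤ 0}
  have hAc : Aᶜ = {ω | -μ < ∑ j, (w j ω * z j).re} := by
    rw [Set.compl_ofPred]
    congr! 2 with ω
    constructor <;> intro <;> linarith
  have htail : P.real Aᶜ ≤ 1 - p := by
    rw [hAc]
    exact hsum.measureReal_gt_le (sub_pos.2 hp.2) (by rw [hvar]; linarith)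
  have hA : MeasurableSet A := by measurability
  calc p = 1 - (1 - p) := by ring
    _ ≤ 1 - P.real Aᶜ := by linarith
    _ = P.real A := by rw [measureReal_compl hA, probReal_univ, sub_sub_cancel]

/-- Hoeffding-based support-robust chance constraint: for independent zero-mean
complex random variables `w j` with `|w j| ≤ l j` a.s., if
`√(2 ln(1/(1−p)))·√(Σ_j l_j² |z_j|²) + μ ≤ 0` with `μ ≤ 0`, then
`P[μ + Σ_j Re(w_j z_j) ≤ 0] ≥ p`. -/
theorem stmt_13 {Ω : Type*} [MeasurableSpace Ω] (P : Measure Ω) [IsProbabilityMeasure P]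
    (n : ℕ) (w : Fin n → Ω → ℂ) (hmeas : ∀ j, Measurable (w j))
    (hindep : iIndepFun w P)
    (l : Fin n → ℝ) (hl : ∀ j, 0 ≤ l j)
    (hbound : ∀ j, ∀ᵐ ω ∂P, ‖w j ω‖ ≤ l j)
    (hmean : ∀ j, (∫ ω, w j ω ∂P) = 0)
    (z : Fin n → ℂ) (μ : ℝ) (hμ : μ ≤ 0) (p : ℝ) (hp : p ∈ Set.Ioo (0:ℝ) 1)
    (h : Real.sqrt (2 * Real.log (1 / (1 - p)))
          * Real.sqrt (∑ j, (l j) ^ 2 * ‖z j‖ ^ 2) + μ ≤ 0) :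
    p ≤ (P {ω | μ + ∑ j, (w j ω * z j).re ≤ 0}).toReal :=
  stmt_13_general P n w hmeas hindep l hbound hmean z μ p hp h
end

section
/- Let z, ξ, μ̂ ∈ ℂ^m, let Γ̂, Δ₁ ∈ ℂ^{m×m} be Hermitian, let Ĵ, Δ₂ ∈ ℂ^{m×m} be arbitrary complex matrices, and let k ≥ 0, r₁ ≥ 0, r₂ ≥ 0 be real numbers with ‖ξ‖ ≤ r₁, ‖Δ₁‖_F ≤ r₂, and ‖Δ₂‖_F ≤ r₂. Assume z^H(Γ̂ + Δ₁)z + Re(z^T(Ĵ + Δ₂)z) ≥ 0 and z^H Γ̂ z + Re(z^T Ĵ z) + 2 r₂ ‖z‖² ≥ 0. Then k·√(z^H(Γ̂ + Δ₁)z + Re(z^T(Ĵ + Δ₂)z)) + Re((μ̂ + ξ)^H z) ≤ k·√(z^H Γ̂ z + Re(z^T Ĵ z) + 2 r₂ ‖z‖²) + Re(μ̂^H z) + r₁ ‖z‖. -/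
/-!
Applying Cauchy–Schwarz first to each row and then across rows bounds a bilinear form
`∑ⱼ ∑ₖ uⱼ Mⱼₖ vₖ` by `‖u‖ ‖M‖_F ‖v‖`. Hence each perturbation `Δᵢ` adds at most `r₂ ‖z‖²`
under the square root, and the mean perturbation `ξ` adds at most `r₁ ‖z‖`. The bound then
follows because `√` is monotone.
-/

open Finset

/-- Frobenius norm of a complex matrix. -/
noncomputable def frobNorm {m : ℕ} (M : Matrix (Fin m) (Fin m) ℂ) : ℝ :=
  Real.sqrt (∑ j, ∑ k, ‖M j k‖ ^ 2)

theorem norm_sum_mul_le_sqrt_mul_sqrt {ι R : Type*} [SeminormedRing R] (s : Finset ι)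
    (u v : ι → R) :
    ‖∑ j ∈ s, u j * v j‖ ≤ √(∑ j ∈ s, ‖u j‖ ^ 2) * √(∑ j ∈ s, ‖v j‖ ^ 2) :=
  calc ‖∑ j ∈ s, u j * v j‖ ≤ ∑ j ∈ s, ‖u j‖ * ‖v j‖ :=
        (norm_sum_le _ _).trans (sum_le_sum fun _ _ => norm_mul_le _ _)
    _ ≤ _ := Real.sum_mul_le_sqrt_mul_sqrt _ _ _

theorem norm_sum_sum_mul_le_frobNorm {m : ℕ} (M : Matrix (Fin m) (Fin m) ℂ) (u v : Fin m → ℂ) :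
    ‖∑ j, ∑ k, u j * M j k * v k‖ ≤
      √(∑ j, ‖u j‖ ^ 2) * frobNorm M * √(∑ k, ‖v k‖ ^ 2) := by
  have hrow : ∀ j, ‖∑ k, M j k * v k‖ ^ 2 ≤ (∑ k, ‖M j k‖ ^ 2) * ∑ k, ‖v k‖ ^ 2 := fun j => by
    have := norm_sum_mul_le_sqrt_mul_sqrt univ (M j) v
    rw [← Real.sqrt_mul (sum_nonneg fun _ _ => by positivity)] at this
    exact (Real.le_sqrt (norm_nonneg _) (by positivity)).1 this
  have hMv : √(∑ j, ‖∑ k, M j k * v k‖ ^ 2) ≤ frobNorm M * √(∑ k, ‖v k‖ ^ 2) := by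
    rw [frobNorm, ← Real.sqrt_mul (sum_nonneg fun _ _ => sum_nonneg fun _ _ => by positivity),
      sum_mul]
    exact Real.sqrt_le_sqrt (sum_le_sum fun j _ => hrow j)
  calc ‖∑ j, ∑ k, u j * M j k * v k‖ = ‖∑ j, u j * ∑ k, M j k * v k‖ := by
        simp only [mul_sum, mul_assoc]
    _ ≤ √(∑ j, ‖u j‖ ^ 2) * √(∑ j, ‖∑ k, M j k * v k‖ ^ 2) :=
        norm_sum_mul_le_sqrt_mul_sqrt _ _ _
    _ ≤ √(∑ j, ‖u j‖ ^ 2) * (frobNorm M * √(∑ k, ‖v k‖ ^ 2)) := by gcongr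
    _ = _ := (mul_assoc _ _ _).symm

theorem re_sum_sum_mul_le_of_frobNorm_le {m : ℕ} {M : Matrix (Fin m) (Fin m) ℂ} {r : ℝ}
    (hM : frobNorm M ≤ r) {u v : Fin m → ℂ} (huv : ∀ j, ‖u j‖ = ‖v j‖) :
    (∑ j, ∑ k, u j * M j k * v k).re ≤ r * ∑ j, ‖v j‖ ^ 2 := by
  have hv : √(∑ j, ‖v j‖ ^ 2) * √(∑ j, ‖v j‖ ^ 2) = ∑ j, ‖v j‖ ^ 2 :=
    Real.mul_self_sqrt (sum_nonneg fun _ _ => by positivity)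
  calc (∑ j, ∑ k, u j * M j k * v k).re ≤ ‖∑ j, ∑ k, u j * M j k * v k‖ := Complex.re_le_norm _
    _ ≤ √(∑ j, ‖v j‖ ^ 2) * frobNorm M * √(∑ j, ‖v j‖ ^ 2) := by
        simpa only [huv] using norm_sum_sum_mul_le_frobNorm M u v
    _ = frobNorm M * ∑ j, ‖v j‖ ^ 2 := by rw [mul_right_comm, hv, mul_comm]
    _ ≤ r * ∑ j, ‖v j‖ ^ 2 := by gcongr

theorem sum_sum_mul_add_apply_mul {m : ℕ} (A B : Matrix (Fin m) (Fin m) ℂ) (u v : Fin m → ℂ) :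
    ∑ j, ∑ k, u j * (A + B) j k * v k =
      ∑ j, ∑ k, u j * A j k * v k + ∑ j, ∑ k, u j * B j k * v k := by
  simp only [Matrix.add_apply, mul_add, add_mul, sum_add_distrib]

theorem stmt_16_general (m : ℕ) (z ξ μhat : Fin m → ℂ)
    (Γ Δ₁ Jm Δ₂ : Matrix (Fin m) (Fin m) ℂ)
    (k r₁ r₂ : ℝ) (hk : 0 ≤ k)
    (hξ : Real.sqrt (∑ j, ‖ξ j‖ ^ 2) ≤ r₁)
    (hΔ1F : frobNorm Δ₁ ≤ r₂) (hΔ2F : frobNorm Δ₂ ≤ r₂) :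
    k * Real.sqrt ((∑ j, ∑ k', star (z j) * (Γ + Δ₁) j k' * z k').re
          + (∑ j, ∑ k', z j * (Jm + Δ₂) j k' * z k').re)
      + (∑ j, star (μhat j + ξ j) * z j).re
    ≤ k * Real.sqrt ((∑ j, ∑ k', star (z j) * Γ j k' * z k').re
          + (∑ j, ∑ k', z j * Jm j k' * z k').re
          + 2 * r₂ * (∑ j, ‖z j‖ ^ 2))
      + (∑ j, star (μhat j) * z j).re
      + r₁ * Real.sqrt (∑ j, ‖z j‖ ^ 2) := by
  have hΔ₁z := re_sum_sum_mul_le_of_frobNorm_le hΔ1F (u := fun j => star (z j)) (v := z)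
    fun j => norm_star _
  have hΔ₂z := re_sum_sum_mul_le_of_frobNorm_le hΔ2F (u := z) (v := z) fun _ => rfl
  have hξz : (∑ j, star (ξ j) * z j).re ≤ r₁ * √(∑ j, ‖z j‖ ^ 2) :=
    calc (∑ j, star (ξ j) * z j).re ≤ ‖∑ j, star (ξ j) * z j‖ := Complex.re_le_norm _
      _ ≤ √(∑ j, ‖ξ j‖ ^ 2) * √(∑ j, ‖z j‖ ^ 2) := by
          simpa only [norm_star] using norm_sum_mul_le_sqrt_mul_sqrt univ (fun j => star (ξ j)) z
      _ ≤ r₁ * √(∑ j, ‖z j‖ ^ 2) := by gcongr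
  rw [add_assoc]
  gcongr k * √?_ + ?_
  · rw [sum_sum_mul_add_apply_mul, sum_sum_mul_add_apply_mul, Complex.add_re, Complex.add_re]
    linarith
  · simp only [star_add, add_mul, sum_add_distrib, Complex.add_re]
    linarith

/-- Robustification inequality for the data-driven reformulation: the
mean-plus-scaled-standard-deviation expression evaluated at perturbed moments
`(μ̂ + ξ, Γ̂ + Δ₁, Ĵ + Δ₂)` is bounded by the inflated nominal expression,
uniformly over `‖ξ‖ ≤ r₁`, `‖Δ₁‖_F ≤ r₂`, `‖Δ₂‖_F ≤ r₂`. -/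
theorem stmt_16 (m : ℕ) (z ξ μhat : Fin m → ℂ)
    (Γ Δ₁ Jm Δ₂ : Matrix (Fin m) (Fin m) ℂ)
    (hΓ : Γ.IsHermitian) (hΔ₁ : Δ₁.IsHermitian)
    (k r₁ r₂ : ℝ) (hk : 0 ≤ k) (hr₁ : 0 ≤ r₁) (hr₂ : 0 ≤ r₂)
    (hξ : Real.sqrt (∑ j, ‖ξ j‖ ^ 2) ≤ r₁)
    (hΔ1F : frobNorm Δ₁ ≤ r₂) (hΔ2F : frobNorm Δ₂ ≤ r₂)
    (h1 : 0 ≤ (∑ j, ∑ k', star (z j) * (Γ + Δ₁) j k' * z k').re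
        + (∑ j, ∑ k', z j * (Jm + Δ₂) j k' * z k').re)
    (h2 : 0 ≤ (∑ j, ∑ k', star (z j) * Γ j k' * z k').re
        + (∑ j, ∑ k', z j * Jm j k' * z k').re
        + 2 * r₂ * (∑ j, ‖z j‖ ^ 2)) :
    k * Real.sqrt ((∑ j, ∑ k', star (z j) * (Γ + Δ₁) j k' * z k').re
          + (∑ j, ∑ k', z j * (Jm + Δ₂) j k' * z k').re)
      + (∑ j, star (μhat j + ξ j) * z j).re
    ≤ k * Real.sqrt ((∑ j, ∑ k', star (z j) * Γ j k' * z k').re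
          + (∑ j, ∑ k', z j * Jm j k' * z k').re
          + 2 * r₂ * (∑ j, ‖z j‖ ^ 2))
      + (∑ j, star (μhat j) * z j).re
      + r₁ * Real.sqrt (∑ j, ‖z j‖ ^ 2) :=
  stmt_16_general m z ξ μhat Γ Δ₁ Jm Δ₂ k r₁ r₂ hk hξ hΔ1F hΔ2F
end
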